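/- For 0 < q < 1, Re(z) > 0 and r a nonnegative integer, the series Σ_{r'=0}^∞ ((s)_{r'}/r'!) q^{r'z}/(1-q^{r'+s}) converges absolutely and defines a meromorphic continuation of ζ(s,z:q) to the whole s-plane whose poles are exactly the simple poles s = -r + (2πi/log q)·l for r ∈ ℤ_{≥0} and l ∈ ℤ, with the residue at s = 0 equal to -1/(log q). -/

import Mathlib

open Complex

/-- The q-bracket `[x]_q = (1 - q^x)/(1 - q)`. -/
noncomputable def qBracket (q : ℝ) (x : ℂ) : ℂ := (1 - (q : ℂ) ^ x) / (1 - (q : ℂ))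

/-- The binomial-series continuation of the q-Hurwitz zeta function. -/
noncomputable def qHurwitzZeta (q : ℝ) (z s : ℂ) : ℂ :=
  ((q : ℂ) - (q : ℂ) ^ 2) ^ s *
    ∑' r : ℕ, (Polynomial.eval s (ascPochhammer ℂ r) / (r.factorial : ℂ)) *
      (q : ℂ) ^ ((r : ℂ) * z) / (1 - (q : ℂ) ^ ((r : ℂ) + s))

/-! For `Re s > 0`, expanding `[k + z]_q ^ (-s)` by the binomial series and summing the resulting
absolutely convergent double series over `k` first (a geometric series in `q ^ (r + s)`) turns the
defining series into the continuation series. Once `r + Re s ≥ 1` its `r`-th term is at most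
`(M)_r / r! · q ^ (r Re z) / (1 - q)` for `‖s‖ ≤ M`, so the series converges absolutely, locally
uniformly in `s`, and is holomorphic wherever no denominator `1 - q ^ (r + s)` vanishes, i.e. off
`{-r + δ l}`. At such a point `p` exactly one denominator vanishes, simply, with derivative
`-log q`; this gives a simple pole with residue `(q - q²) ^ p (p)_r / r! q ^ (r z) / (-log q)`,
nonzero because `(p)_r` vanishes only at `0, -1, …, 1 - r`, and equal to `-1 / log q` at `p = 0`. -/

open Filter Topology Polynomial

theorem Ring.multichoose_eq_eval_ascPochhammer_div {K : Type*} [Field K] [CharZero K] (s : K)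
    (n : ℕ) : Ring.multichoose s n = (ascPochhammer K n).eval s / n.factorial := by
  rw [eq_div_iff (by exact_mod_cast n.factorial_ne_zero), mul_comm, ← nsmul_eq_mul,
    Ring.factorial_nsmul_multichoose_eq_ascPochhammer, ascPochhammer_smeval_eq_eval]

theorem Ring.multichoose_eq_zero_iff {K : Type*} [Field K] [CharZero K] (s : K) (n : ℕ) :
    Ring.multichoose s n = 0 ↔ ∃ k < n, (k : K) = -s := by
  rw [Ring.multichoose_eq_eval_ascPochhammer_div, div_eq_zero_iff, ascPochhammer_eval_eq_zero_iff,
    or_iff_left (by exact_mod_cast n.factorial_ne_zero)]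

theorem differentiable_multichoose {𝕜 : Type*} [RCLike 𝕜] (n : ℕ) :
    Differentiable 𝕜 fun s : 𝕜 ↦ Ring.multichoose s n := by
  simpa only [Ring.multichoose_eq_eval_ascPochhammer_div] using
    (ascPochhammer 𝕜 n).differentiable.div_const _

theorem norm_eval_ascPochhammer_le {R : Type*} [NormedCommRing R] [NormOneClass R] {s : R}
    {M : ℝ} (hs : ‖s‖ ≤ M) (n : ℕ) : ‖(ascPochhammer R n).eval s‖ ≤ (ascPochhammer ℝ n).eval M := by
  induction n with
  | zero => simp
  | succ n ih =>
    simp only [ascPochhammer_succ_right, eval_mul, eval_add, eval_X, eval_natCast]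
    have hsn : ‖s + n‖ ≤ M + n := by
      grw [norm_add_le, hs, Nat.norm_cast_le, norm_one, mul_one]
    calc ‖(ascPochhammer R n).eval s * (s + n)‖
        ≤ ‖(ascPochhammer R n).eval s‖ * ‖s + n‖ := norm_mul_le _ _
      _ ≤ (ascPochhammer ℝ n).eval M * (M + n) := by
        gcongr
        exact (norm_nonneg _).trans ih

theorem norm_multichoose_le {𝕜 : Type*} [RCLike 𝕜] {s : 𝕜} {M : ℝ} (hs : ‖s‖ ≤ M) (n : ℕ) :
    ‖Ring.multichoose s n‖ ≤ Ring.multichoose M n := by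
  rw [Ring.multichoose_eq_eval_ascPochhammer_div, Ring.multichoose_eq_eval_ascPochhammer_div,
    norm_div, RCLike.norm_natCast]
  gcongr
  exact norm_eval_ascPochhammer_le hs n

theorem Complex.hasSum_multichoose_mul_pow (s : ℂ) {w : ℂ} (hw : ‖w‖ < 1) :
    HasSum (fun n ↦ Ring.multichoose s n * w ^ n) ((1 - w) ^ (-s)) := by
  have := (one_div_one_sub_cpow_hasFPowerSeriesOnBall_zero s).hasSum
    (y := w) (by simpa [enorm_eq_nnnorm, ← NNReal.coe_lt_one] using hw)
  simpa [FormalMultilinearSeries.ofScalars_apply_eq, Ring.multichoose_eq, cpow_neg, mul_comm]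
    using this

theorem Real.summable_multichoose_mul_pow (a : ℝ) {x : ℝ} (hx : |x| < 1) :
    Summable (fun n ↦ Ring.multichoose a n * x ^ n) := by
  have := (one_div_one_sub_rpow_hasFPowerSeriesOnBall_zero a).hasSum
    (y := x) (by simpa [enorm_eq_nnnorm, ← NNReal.coe_lt_one] using hx)
  simpa [FormalMultilinearSeries.ofScalars_apply_eq, Ring.multichoose_eq, mul_comm]
    using this.summable

theorem summable_norm_multichoose_mul_pow (s : ℂ) {x : ℝ} (hx0 : 0 ≤ x) (hx1 : x < 1) :
    Summable (fun n ↦ ‖Ring.multichoose s n‖ * x ^ n) :=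
  .of_nonneg_of_le (fun _ ↦ by positivity)
    (fun n ↦ by gcongr; exact norm_multichoose_le le_rfl n)
    (Real.summable_multichoose_mul_pow ‖s‖ (by rwa [abs_of_nonneg hx0]))

theorem Complex.div_ofReal_cpow {b : ℝ} (hb : 0 < b) (w s : ℂ) :
    (w / b) ^ s = w ^ s / (b : ℂ) ^ s := by
  rcases eq_or_ne w 0 with rfl | hw
  · rcases eq_or_ne s 0 with rfl | hs <;> simp [zero_cpow, *]
  have hb' : (b : ℂ) ≠ 0 := by exact_mod_cast hb.ne'
  rw [div_eq_mul_inv, ← ofReal_inv, cpow_def_of_ne_zero (mul_ne_zero hw (by simpa using hb')),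
    log_mul_ofReal _ (inv_pos.2 hb) _ hw, cpow_def_of_ne_zero hw, cpow_def_of_ne_zero hb',
    ← ofReal_log hb.le, Real.log_inv, div_eq_mul_inv, ← exp_neg, ← exp_add]
  congr 1
  push_cast
  ring

theorem Complex.natCast_le_norm_of_re_eq_neg {s : ℂ} {r : ℕ} (h : s.re = -r) : (r : ℝ) ≤ ‖s‖ := by
  simpa [h] using abs_re_le_norm s

section QPowers

variable {q : ℝ}

theorem norm_ofReal_cpow_natCast_mul (hq : 0 < q) (n : ℕ) (w : ℂ) :
    ‖(q : ℂ) ^ ((n : ℂ) * w)‖ = (q ^ w.re) ^ n := by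
  rw [cpow_nat_mul, norm_pow, norm_cpow_eq_rpow_re_of_pos hq]

theorem one_sub_ofReal_cpow_eq_zero_iff (hq0 : 0 < q) (hq1 : q ≠ 1) (w : ℂ) :
    1 - (q : ℂ) ^ w = 0 ↔ ∃ l : ℤ, w = (2 * Real.pi * I / Real.log q) * l := by
  have hlog : (Real.log q : ℂ) ≠ 0 := by exact_mod_cast Real.log_ne_zero_of_pos_of_ne_one hq0 hq1
  rw [sub_eq_zero, eq_comm, cpow_def_of_ne_zero (by exact_mod_cast hq0.ne'), ← ofReal_log hq0.le,
    exp_eq_one_iff]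
  refine exists_congr fun l ↦ ?_
  constructor <;> intro h
  · field_simp
    linear_combination h
  · rw [h]
    field_simp

theorem re_eq_neg_of_one_sub_ofReal_cpow_eq_zero (hq0 : 0 < q) (hq1 : q ≠ 1) {r : ℕ} {s : ℂ}
    (h : 1 - (q : ℂ) ^ ((r : ℂ) + s) = 0) : s.re = -r := by
  obtain ⟨l, hl⟩ := (one_sub_ofReal_cpow_eq_zero_iff hq0 hq1 _).1 h
  have hperiod : ((2 * Real.pi * I / Real.log q) * l).re = 0 := by simp
  have hre := congrArg re hl
  rw [add_re, natCast_re, hperiod] at hre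
  linarith

theorem one_sub_le_norm_one_sub_ofReal_cpow (hq0 : 0 < q) (hq1 : q < 1) {w : ℂ} (hw : 1 ≤ w.re) :
    1 - q ≤ ‖1 - (q : ℂ) ^ w‖ := by
  have hpow : ‖(q : ℂ) ^ w‖ ≤ q := by
    rw [norm_cpow_eq_rpow_re_of_pos hq0]
    simpa using Real.rpow_le_rpow_of_exponent_ge hq0 hq1.le hw
  linarith [norm_sub_norm_le (1 : ℂ) ((q : ℂ) ^ w), norm_one (α := ℂ)]

end QPowers

def qHurwitzPoles (q : ℝ) : Set ℂ :=
  {s | ∃ r : ℕ, ∃ l : ℤ, s = -(r : ℂ) + (2 * Real.pi * I / Real.log q) * l}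

theorem mem_qHurwitzPoles_iff {q : ℝ} (hq0 : 0 < q) (hq1 : q ≠ 1) {s : ℂ} :
    s ∈ qHurwitzPoles q ↔ ∃ r : ℕ, 1 - (q : ℂ) ^ ((r : ℂ) + s) = 0 := by
  simp only [qHurwitzPoles, Set.mem_ofPred_eq, one_sub_ofReal_cpow_eq_zero_iff hq0 hq1]
  exact exists_congr fun r ↦ exists_congr fun l ↦ by
    constructor <;> intro h <;> linear_combination h

noncomputable def qHurwitzTerm (q : ℝ) (z s : ℂ) (r : ℕ) : ℂ :=
  Ring.multichoose s r * (q : ℂ) ^ ((r : ℂ) * z) / (1 - (q : ℂ) ^ ((r : ℂ) + s))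

noncomputable def qHurwitzTail (q : ℝ) (z : ℂ) (N : ℕ) (s : ℂ) : ℂ :=
  ∑' r : ℕ, qHurwitzTerm q z s (r + (N + 1))

theorem qHurwitzZeta_eq_mul_tsum (q : ℝ) (z s : ℂ) :
    qHurwitzZeta q z s = ((q : ℂ) - (q : ℂ) ^ 2) ^ s * ∑' r : ℕ, qHurwitzTerm q z s r := by
  simp only [qHurwitzZeta, qHurwitzTerm, Ring.multichoose_eq_eval_ascPochhammer_div]

section Continuation

variable {q : ℝ} {z : ℂ}

theorem differentiableAt_qHurwitzTerm (hq0 : 0 < q) {s : ℂ} {r : ℕ}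
    (h : 1 - (q : ℂ) ^ ((r : ℂ) + s) ≠ 0) : DifferentiableAt ℂ (qHurwitzTerm q z · r) s := by
  refine (((differentiable_multichoose r).mul_const _) s).div ?_ h
  exact (((differentiableAt_const _).add differentiableAt_id).const_cpow
    (.inl (by exact_mod_cast hq0.ne'))).const_sub 1

theorem norm_qHurwitzTerm_le (hq0 : 0 < q) (hq1 : q < 1) {s : ℂ} {M : ℝ}
    (hs : ‖s‖ ≤ M) {r : ℕ} (hr : 1 ≤ r + s.re) :
    ‖qHurwitzTerm q z s r‖ ≤ Ring.multichoose M r * (q ^ z.re) ^ r / (1 - q) := by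
  have hcoeff := norm_multichoose_le hs r
  rw [qHurwitzTerm, norm_div, norm_mul, norm_ofReal_cpow_natCast_mul hq0]
  refine div_le_div₀ (mul_nonneg ((norm_nonneg _).trans hcoeff) (by positivity))
    (by gcongr) (by linarith) (one_sub_le_norm_one_sub_ofReal_cpow hq0 hq1 (by simpa using hr))

theorem norm_qHurwitzTerm_add_le (hq0 : 0 < q) (hq1 : q < 1) {N : ℕ} {s : ℂ}
    (hs : ‖s‖ ≤ N) (r : ℕ) :
    ‖qHurwitzTerm q z s (r + (N + 1))‖ ≤
      Ring.multichoose (N : ℝ) (r + (N + 1)) * (q ^ z.re) ^ (r + (N + 1)) / (1 - q) := by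
  refine norm_qHurwitzTerm_le hq0 hq1 hs ?_
  have hre : -‖s‖ ≤ s.re := (neg_le_neg (abs_re_le_norm s)).trans (neg_abs_le s.re)
  push_cast
  linarith

theorem summable_qHurwitzTail_majorant (hq0 : 0 < q) (hq1 : q < 1) (hz : 0 < z.re) (N : ℕ) :
    Summable fun r : ℕ ↦
      Ring.multichoose (N : ℝ) (r + (N + 1)) * (q ^ z.re) ^ (r + (N + 1)) / (1 - q) := by
  have hx : |q ^ z.re| < 1 := by
    rw [abs_of_pos (Real.rpow_pos_of_pos hq0 _)]
    exact Real.rpow_lt_one hq0.le hq1 hz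
  exact ((summable_nat_add_iff (N + 1)).2 (Real.summable_multichoose_mul_pow N hx)).div_const _

theorem summable_norm_qHurwitzTerm (hq0 : 0 < q) (hq1 : q < 1) (hz : 0 < z.re) (s : ℂ) :
    Summable fun r : ℕ ↦ ‖qHurwitzTerm q z s r‖ := by
  obtain ⟨N, hN⟩ := exists_nat_ge ‖s‖
  rw [← summable_nat_add_iff (N + 1)]
  exact .of_nonneg_of_le (fun _ ↦ norm_nonneg _) (norm_qHurwitzTerm_add_le hq0 hq1 hN)
    (summable_qHurwitzTail_majorant hq0 hq1 hz N)

theorem tsum_qHurwitzTerm_eq_sum_add_tail (hq0 : 0 < q) (hq1 : q < 1) (hz : 0 < z.re) (N : ℕ)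
    (s : ℂ) : ∑' r : ℕ, qHurwitzTerm q z s r =
      ∑ r ∈ Finset.range (N + 1), qHurwitzTerm q z s r + qHurwitzTail q z N s :=
  ((summable_norm_qHurwitzTerm hq0 hq1 hz s).of_norm.sum_add_tsum_nat_add (N + 1)).symm

theorem differentiableAt_qHurwitzTail (hq0 : 0 < q) (hq1 : q < 1) (hz : 0 < z.re) {N : ℕ}
    {s : ℂ} (hs : ‖s‖ < N) : DifferentiableAt ℂ (qHurwitzTail q z N) s := by
  refine (Complex.differentiableOn_tsum_of_summable_norm
    (summable_qHurwitzTail_majorant hq0 hq1 hz N) (fun r w hw ↦ ?_) Metric.isOpen_ball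
    (fun r w hw ↦ norm_qHurwitzTerm_add_le hq0 hq1 (mem_ball_zero_iff.1 hw).le r)).differentiableAt
    (Metric.isOpen_ball.mem_nhds (mem_ball_zero_iff.2 hs))
  refine (differentiableAt_qHurwitzTerm hq0 fun h ↦ ?_).differentiableWithinAt
  have hle := (natCast_le_norm_of_re_eq_neg
    (re_eq_neg_of_one_sub_ofReal_cpow_eq_zero hq0 hq1.ne h)).trans (mem_ball_zero_iff.1 hw).le
  push_cast at hle
  linarith

theorem differentiableAt_tsum_qHurwitzTerm (hq0 : 0 < q) (hq1 : q < 1) (hz : 0 < z.re) {s : ℂ}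
    (hs : s ∉ qHurwitzPoles q) : DifferentiableAt ℂ (fun s ↦ ∑' r : ℕ, qHurwitzTerm q z s r) s := by
  obtain ⟨N, hN⟩ := exists_nat_gt ‖s‖
  simp_rw [tsum_qHurwitzTerm_eq_sum_add_tail hq0 hq1 hz N]
  refine .add (.fun_sum fun r _ ↦ differentiableAt_qHurwitzTerm hq0 fun h ↦ hs ?_)
    (differentiableAt_qHurwitzTail hq0 hq1 hz hN)
  exact (mem_qHurwitzPoles_iff hq0 hq1.ne).2 ⟨r, h⟩

end Continuation

theorem tendsto_sub_mul_nhdsNE_zero {𝕜 : Type*} [NontriviallyNormedField 𝕜] {f : 𝕜 → 𝕜} {p : 𝕜}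
    (hf : ContinuousAt f p) : Tendsto (fun s ↦ (s - p) * f s) (𝓝[≠] p) (𝓝 0) := by
  have : ContinuousAt (fun s ↦ (s - p) * f s) p := (continuousAt_id.sub continuousAt_const).mul hf
  simpa using this.tendsto.mono_left nhdsWithin_le_nhds

section Poles

variable {q : ℝ} {z : ℂ}

theorem tendsto_sub_div_one_sub_ofReal_cpow (hq0 : 0 < q) (hq1 : q ≠ 1) {w p : ℂ}
    (hp : 1 - (q : ℂ) ^ (w + p) = 0) :
    Tendsto (fun s ↦ (s - p) / (1 - (q : ℂ) ^ (w + s))) (𝓝[≠] p) (𝓝 (-(Real.log q : ℂ))⁻¹) := by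
  have hd : HasDerivAt (fun s : ℂ ↦ 1 - (q : ℂ) ^ (w + s)) (-(Real.log q : ℂ)) p := by
    have := (((hasDerivAt_id' p).const_add w).const_cpow
      (.inl (by exact_mod_cast hq0.ne' : (q : ℂ) ≠ 0))).const_sub 1
    rwa [← ofReal_log hq0.le, ← sub_eq_zero.1 hp, mul_one, one_mul] at this
  have hlog : -(Real.log q : ℂ) ≠ 0 :=
    neg_ne_zero.2 (by exact_mod_cast Real.log_ne_zero_of_pos_of_ne_one hq0 hq1)
  refine ((hasDerivAt_iff_tendsto_slope.1 hd).inv₀ hlog).congr fun s ↦ ?_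
  rw [slope_def_field, hp, sub_zero, inv_div]

theorem tendsto_sub_mul_qHurwitzTerm (hq0 : 0 < q) (hq1 : q ≠ 1) {p : ℂ} {r : ℕ}
    (hp : 1 - (q : ℂ) ^ ((r : ℂ) + p) = 0) :
    Tendsto (fun s ↦ (s - p) * qHurwitzTerm q z s r) (𝓝[≠] p)
      (𝓝 (Ring.multichoose p r * (q : ℂ) ^ ((r : ℂ) * z) * (-(Real.log q : ℂ))⁻¹)) := by
  have hcoeff : Tendsto (fun s ↦ Ring.multichoose s r * (q : ℂ) ^ ((r : ℂ) * z)) (𝓝[≠] p)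
      (𝓝 (Ring.multichoose p r * (q : ℂ) ^ ((r : ℂ) * z))) :=
    (((differentiable_multichoose r).continuous.mul continuous_const).tendsto p).mono_left
      nhdsWithin_le_nhds
  refine (hcoeff.mul (tendsto_sub_div_one_sub_ofReal_cpow hq0 hq1 hp)).congr fun s ↦ ?_
  rw [qHurwitzTerm]
  ring

theorem tendsto_sub_mul_tsum_qHurwitzTerm (hq0 : 0 < q) (hq1 : q < 1) (hz : 0 < z.re) {p : ℂ}
    {r₀ : ℕ} (hp : 1 - (q : ℂ) ^ ((r₀ : ℂ) + p) = 0) :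
    Tendsto (fun s ↦ (s - p) * ∑' r : ℕ, qHurwitzTerm q z s r) (𝓝[≠] p)
      (𝓝 (Ring.multichoose p r₀ * (q : ℂ) ^ ((r₀ : ℂ) * z) * (-(Real.log q : ℂ))⁻¹)) := by
  have hre := re_eq_neg_of_one_sub_ofReal_cpow_eq_zero hq0 hq1.ne hp
  obtain ⟨N, hN⟩ := exists_nat_gt ‖p‖
  have hr₀ : r₀ ∈ Finset.range (N + 1) := Finset.mem_range.2 <| Nat.lt_succ_of_le <| by
    exact_mod_cast (natCast_le_norm_of_re_eq_neg hre).trans hN.le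
  have hterm : ∀ r ∈ (Finset.range (N + 1)).erase r₀,
      DifferentiableAt ℂ (qHurwitzTerm q z · r) p := fun r hr ↦
    differentiableAt_qHurwitzTerm hq0 fun h ↦ Finset.ne_of_mem_erase hr <| by
      exact_mod_cast neg_injective
        ((re_eq_neg_of_one_sub_ofReal_cpow_eq_zero hq0 hq1.ne h).symm.trans hre)
  set R := fun s ↦ ∑ r ∈ (Finset.range (N + 1)).erase r₀, qHurwitzTerm q z s r +
    qHurwitzTail q z N s
  have hR : ContinuousAt R p :=
    ((DifferentiableAt.fun_sum hterm).add
      (differentiableAt_qHurwitzTail hq0 hq1 hz hN)).continuousAt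
  have hsplit : ∀ s, (s - p) * ∑' r : ℕ, qHurwitzTerm q z s r =
      (s - p) * qHurwitzTerm q z s r₀ + (s - p) * R s := fun s ↦ by
    rw [tsum_qHurwitzTerm_eq_sum_add_tail hq0 hq1 hz N, ← Finset.add_sum_erase _ _ hr₀]
    ring
  simpa only [hsplit, add_zero] using
    (tendsto_sub_mul_qHurwitzTerm hq0 hq1.ne hp).add (tendsto_sub_mul_nhdsNE_zero hR)

end Poles

section Identity

variable {q : ℝ} {z s : ℂ}

theorem ofReal_cpow_mul_add_one_div_qBracket_cpow (hq0 : 0 < q) (hq1 : q < 1) (a w : ℂ) :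
    (q : ℂ) ^ (s * (a + 1)) / qBracket q w ^ s =
      ((q : ℂ) - (q : ℂ) ^ 2) ^ s * ((q : ℂ) ^ (s * a) * (1 - (q : ℂ) ^ w) ^ (-s)) := by
  have hsq : (q : ℂ) - (q : ℂ) ^ 2 = ((q : ℝ) : ℂ) * ((1 - q : ℝ) : ℂ) := by push_cast; ring
  have hbr : qBracket q w = (1 - (q : ℂ) ^ w) / ((1 - q : ℝ) : ℂ) := by
    rw [qBracket]; push_cast; rfl
  rw [hsq, mul_cpow_ofReal_nonneg hq0.le (by linarith), hbr, div_ofReal_cpow (by linarith),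
    mul_add, mul_one, cpow_add _ _ (by exact_mod_cast hq0.ne'), cpow_neg, div_div_eq_mul_div]
  ring

noncomputable def qHurwitzDoubleTerm (q : ℝ) (z s : ℂ) (k r : ℕ) : ℂ :=
  Ring.multichoose s r * (q : ℂ) ^ ((r : ℂ) * z) * ((q : ℂ) ^ ((r : ℂ) + s)) ^ k

theorem hasSum_qHurwitzDoubleTerm_right (hq0 : 0 < q) (hq1 : q < 1) (hz : 0 < z.re) (k : ℕ) :
    HasSum (qHurwitzDoubleTerm q z s k)
      ((q : ℂ) ^ (s * k) * (1 - (q : ℂ) ^ ((k : ℂ) + z)) ^ (-s)) := by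
  have hw : ‖(q : ℂ) ^ ((k : ℂ) + z)‖ < 1 := by
    rw [norm_cpow_eq_rpow_re_of_pos hq0]
    exact Real.rpow_lt_one hq0.le hq1 (by simp only [add_re, natCast_re]; positivity)
  refine ((hasSum_multichoose_mul_pow s hw).mul_left ((q : ℂ) ^ (s * k))).congr_fun fun r ↦ ?_
  have hq : (q : ℂ) ≠ 0 := by exact_mod_cast hq0.ne'
  rw [qHurwitzDoubleTerm, ← cpow_mul_nat, ← cpow_mul_nat, mul_assoc, ← cpow_add _ _ hq,
    mul_left_comm, ← cpow_add _ _ hq]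
  ring_nf

theorem hasSum_qHurwitzDoubleTerm_left (hq0 : 0 < q) (hq1 : q < 1) (hs : 0 < s.re) (r : ℕ) :
    HasSum (fun k ↦ qHurwitzDoubleTerm q z s k r) (qHurwitzTerm q z s r) := by
  have hw : ‖(q : ℂ) ^ ((r : ℂ) + s)‖ < 1 := by
    rw [norm_cpow_eq_rpow_re_of_pos hq0]
    exact Real.rpow_lt_one hq0.le hq1 (by simp only [add_re, natCast_re]; positivity)
  simpa only [qHurwitzTerm, qHurwitzDoubleTerm, div_eq_mul_inv] using
    (hasSum_geometric_of_norm_lt_one hw).mul_left (Ring.multichoose s r * (q : ℂ) ^ ((r : ℂ) * z))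

theorem summable_uncurry_qHurwitzDoubleTerm (hq0 : 0 < q) (hq1 : q < 1) (hz : 0 < z.re)
    (hs : 0 < s.re) : Summable (Function.uncurry (qHurwitzDoubleTerm q z s)) := by
  have hbound : ∀ k r : ℕ, ‖qHurwitzDoubleTerm q z s k r‖ ≤
      (q ^ s.re) ^ k * (‖Ring.multichoose s r‖ * (q ^ z.re) ^ r) := fun k r ↦ by
    have hratio : ‖(q : ℂ) ^ ((r : ℂ) + s)‖ ≤ q ^ s.re := by
      rw [norm_cpow_eq_rpow_re_of_pos hq0]
      exact Real.rpow_le_rpow_of_exponent_ge hq0 hq1.le (by simp)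
    rw [qHurwitzDoubleTerm, norm_mul, norm_mul, norm_pow, norm_ofReal_cpow_natCast_mul hq0,
      mul_comm]
    gcongr
  have hmajorant := (summable_geometric_of_lt_one (by positivity)
    (Real.rpow_lt_one hq0.le hq1 hs)).mul_of_nonneg
    (summable_norm_multichoose_mul_pow s (by positivity) (Real.rpow_lt_one hq0.le hq1 hz))
    (fun _ ↦ by positivity) (fun _ ↦ by positivity)
  exact .of_norm (.of_nonneg_of_le (fun _ ↦ norm_nonneg _) (fun kr ↦ hbound kr.1 kr.2) hmajorant)

theorem qHurwitzZeta_eq_tsum_qBracket (hq0 : 0 < q) (hq1 : q < 1) (hz : 0 < z.re)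
    (hs : 0 < s.re) :
    qHurwitzZeta q z s = ∑' k : ℕ, (q : ℂ) ^ (s * (k + 1)) / (qBracket q (k + z)) ^ s := by
  simp_rw [ofReal_cpow_mul_add_one_div_qBracket_cpow hq0 hq1, tsum_mul_left,
    qHurwitzZeta_eq_mul_tsum]
  congr 1
  calc ∑' r : ℕ, qHurwitzTerm q z s r = ∑' (r : ℕ) (k : ℕ), qHurwitzDoubleTerm q z s k r :=
        tsum_congr fun r ↦ (hasSum_qHurwitzDoubleTerm_left hq0 hq1 hs r).tsum_eq.symm
    _ = ∑' (k : ℕ) (r : ℕ), qHurwitzDoubleTerm q z s k r :=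
        (summable_uncurry_qHurwitzDoubleTerm hq0 hq1 hz hs).tsum_comm
    _ = _ := tsum_congr fun k ↦ (hasSum_qHurwitzDoubleTerm_right hq0 hq1 hz k).tsum_eq

end Identity

section Zeta

variable {q : ℝ} {z : ℂ}

theorem ofReal_sub_sq_ne_zero (hq0 : 0 < q) (hq1 : q ≠ 1) : (q : ℂ) - (q : ℂ) ^ 2 ≠ 0 := by
  have : (q : ℂ) - (q : ℂ) ^ 2 = ((q * (1 - q) : ℝ) : ℂ) := by push_cast; ring
  rw [this, ofReal_ne_zero]
  exact mul_ne_zero hq0.ne' (sub_ne_zero.2 hq1.symm)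

theorem differentiableAt_qHurwitzZeta (hq0 : 0 < q) (hq1 : q < 1) (hz : 0 < z.re) {s : ℂ}
    (hs : s ∉ qHurwitzPoles q) : DifferentiableAt ℂ (qHurwitzZeta q z) s := by
  rw [funext (qHurwitzZeta_eq_mul_tsum q z)]
  exact (differentiableAt_id.const_cpow (.inl (ofReal_sub_sq_ne_zero hq0 hq1.ne))).mul
    (differentiableAt_tsum_qHurwitzTerm hq0 hq1 hz hs)

noncomputable def qHurwitzResidue (q : ℝ) (z p : ℂ) (r : ℕ) : ℂ :=
  ((q : ℂ) - (q : ℂ) ^ 2) ^ p *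
    (Ring.multichoose p r * (q : ℂ) ^ ((r : ℂ) * z) * (-(Real.log q : ℂ))⁻¹)

theorem tendsto_sub_mul_qHurwitzZeta (hq0 : 0 < q) (hq1 : q < 1) (hz : 0 < z.re) {p : ℂ} {r : ℕ}
    (hp : 1 - (q : ℂ) ^ ((r : ℂ) + p) = 0) :
    Tendsto (fun s ↦ (s - p) * qHurwitzZeta q z s) (𝓝[≠] p) (𝓝 (qHurwitzResidue q z p r)) := by
  have hpre : Tendsto (fun s : ℂ ↦ ((q : ℂ) - (q : ℂ) ^ 2) ^ s) (𝓝[≠] p)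
      (𝓝 (((q : ℂ) - (q : ℂ) ^ 2) ^ p)) :=
    ((continuous_id.const_cpow (.inl (ofReal_sub_sq_ne_zero hq0 hq1.ne))).tendsto p).mono_left
      nhdsWithin_le_nhds
  refine (hpre.mul (tendsto_sub_mul_tsum_qHurwitzTerm hq0 hq1 hz hp)).congr fun s ↦ ?_
  rw [qHurwitzZeta_eq_mul_tsum]
  ring

theorem qHurwitzResidue_ne_zero (hq0 : 0 < q) (hq1 : q ≠ 1) {p : ℂ} {r : ℕ}
    (hp : 1 - (q : ℂ) ^ ((r : ℂ) + p) = 0) : qHurwitzResidue q z p r ≠ 0 := by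
  have hq : (q : ℂ) ≠ 0 := by exact_mod_cast hq0.ne'
  have hcoeff : Ring.multichoose p r ≠ 0 := by
    intro h
    obtain ⟨k, hk, hkp⟩ := (Ring.multichoose_eq_zero_iff p r).1 h
    have hre := congrArg re hkp
    rw [natCast_re, neg_re, re_eq_neg_of_one_sub_ofReal_cpow_eq_zero hq0 hq1 hp, neg_neg] at hre
    exact hk.ne (by exact_mod_cast hre)
  refine mul_ne_zero (cpow_ne_zero_iff.2 (.inl (ofReal_sub_sq_ne_zero hq0 hq1)))
    (mul_ne_zero (mul_ne_zero hcoeff (cpow_ne_zero_iff.2 (.inl hq))) (inv_ne_zero ?_))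
  exact neg_ne_zero.2 (by exact_mod_cast Real.log_ne_zero_of_pos_of_ne_one hq0 hq1)

theorem qHurwitzResidue_zero (q : ℝ) (z : ℂ) : qHurwitzResidue q z 0 0 = -1 / Real.log q := by
  simp [qHurwitzResidue, div_eq_mul_inv]

end Zeta

/-- the continuation series converges absolutely away from the set
`P = {-r + δl}`, agrees with the q-Hurwitz series on `Re s > 0`, is holomorphic off `P`,
has a simple pole at every point of `P`, and the residue at `s = 0` is `-1/log q`. -/
theorem qHurwitz_meromorphic_continuation (q : ℝ) (hq0 : 0 < q) (hq1 : q < 1)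
    (z : ℂ) (hz : 0 < z.re) :
    (∀ s : ℂ, s ∉ {s : ℂ | ∃ r : ℕ, ∃ l : ℤ, s = -(r : ℂ) + (2 * Real.pi * I / Real.log q) * l} →
        Summable (fun r : ℕ =>
          ‖(Polynomial.eval s (ascPochhammer ℂ r) / (r.factorial : ℂ)) *
            (q : ℂ) ^ ((r : ℂ) * z) / (1 - (q : ℂ) ^ ((r : ℂ) + s))‖)) ∧
    (∀ s : ℂ, 0 < s.re →
        qHurwitzZeta q z s = ∑' k : ℕ, (q : ℂ) ^ (s * (k + 1)) / (qBracket q (k + z)) ^ s) ∧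
    DifferentiableOn ℂ (qHurwitzZeta q z)
      {s : ℂ | ¬ ∃ r : ℕ, ∃ l : ℤ, s = -(r : ℂ) + (2 * Real.pi * I / Real.log q) * l} ∧
    (∀ p : ℂ, (∃ r : ℕ, ∃ l : ℤ, p = -(r : ℂ) + (2 * Real.pi * I / Real.log q) * l) →
        ∃ c : ℂ, c ≠ 0 ∧
          Filter.Tendsto (fun s : ℂ => (s - p) * qHurwitzZeta q z s)
            (nhdsWithin p {p}ᶜ) (nhds c)) ∧
    Filter.Tendsto (fun s : ℂ => s * qHurwitzZeta q z s)
      (nhdsWithin 0 {(0 : ℂ)}ᶜ) (nhds (-1 / Real.log q)) := by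
  refine ⟨fun s _ ↦ ?_, fun s hs ↦ qHurwitzZeta_eq_tsum_qBracket hq0 hq1 hz hs,
    fun s hs ↦ (differentiableAt_qHurwitzZeta hq0 hq1 hz hs).differentiableWithinAt,
    fun p hp ↦ ?_, ?_⟩
  · simpa only [qHurwitzTerm, Ring.multichoose_eq_eval_ascPochhammer_div] using
      summable_norm_qHurwitzTerm hq0 hq1 hz s
  · obtain ⟨r, hr⟩ := (mem_qHurwitzPoles_iff hq0 hq1.ne).1 hp
    exact ⟨_, qHurwitzResidue_ne_zero hq0 hq1.ne hr, tendsto_sub_mul_qHurwitzZeta hq0 hq1 hz hr⟩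
  · simpa [qHurwitzResidue_zero] using
      tendsto_sub_mul_qHurwitzZeta hq0 hq1 hz (p := 0) (r := 0) (by simp)
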